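/- arXiv:2509.19299 — 3 statements merged into one kernel-verified Lean document; each statement's English description precedes it below -/
import Mathlib

section
/- For every von Neumann algebra M on a finite-dimensional complex Hilbert space H, the double commutant of M equals M, i.e. M'' = M. -/
/-!
Let `P` be the orthogonal projection of the matrices onto `M` for the trace inner product
`⟪X, Y⟫ = tr (Y Xᴴ)`. Left multiplication by `A` and by its adjoint `Aᴴ` both preserve `M` when
`A ∈ M`, so `P` commutes with left multiplication by `M`. Viewing the matrices as the direct sum
of their columns, a linear map `T` commuting with left multiplication by `M` has all its blocks
`Qⱼₖ` in `M'`, and `T X = ∑ⱼ ∑ₖ Qⱼₖ X Eₖⱼ`; so `T` also commutes with left multiplication by every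
`B ∈ M''`. Hence `B = B P 1 = P B ∈ M`.
-/

theorem Submodule.starProjection_apply_comm_of_invariant {𝕜 E : Type*} [RCLike 𝕜]
    [NormedAddCommGroup E] [InnerProductSpace 𝕜 E] (K : Submodule 𝕜 E) [K.HasOrthogonalProjection]
    {T S : E →ₗ[𝕜] E} (hTS : ∀ x y, inner 𝕜 (T x) y = inner 𝕜 x (S y)) (hT : ∀ x ∈ K, T x ∈ K)
    (hS : ∀ x ∈ K, S x ∈ K) (x : E) : K.starProjection (T x) = T (K.starProjection x) := by
  refine eq_starProjection_of_mem_of_inner_eq_zero (hT _ (starProjection_apply_mem K x))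
    fun k hk => ?_
  rw [← map_sub, hTS]
  exact inner_left_of_mem_orthogonal (hS k hk) (sub_starProjection_mem_orthogonal x)

namespace Matrix

variable {R ι : Type*} [CommSemiring R] [Fintype ι] [DecidableEq ι]

/-- The `(j, k)` block of `T` for `Matrix ι ι R` viewed as the direct sum of its columns: it sends
column `k` of `X` to its contribution to column `j` of `T X`. -/
def columnBlock (T : Matrix ι ι R →ₗ[R] Matrix ι ι R) (j k : ι) : Matrix ι ι R :=
  of fun r s => T (single s k 1) r j

theorem linearMap_apply_eq_sum_smul (T : Matrix ι ι R →ₗ[R] Matrix ι ι R) (X : Matrix ι ι R) :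
    T X = ∑ s, ∑ k, X s k • T (single s k 1) := by
  conv_lhs => rw [matrix_eq_sum_single X]
  simp only [map_sum, ← map_smul, smul_single, smul_eq_mul, mul_one]

theorem linearMap_apply_eq_sum_columnBlock (T : Matrix ι ι R →ₗ[R] Matrix ι ι R)
    (X : Matrix ι ι R) : T X = ∑ j, ∑ k, columnBlock T j k * X * single k j 1 := by
  ext r c
  rw [linearMap_apply_eq_sum_smul, Finset.sum_comm]
  simp [columnBlock, mul_apply, sum_apply, single_apply, mul_comm, Finset.mul_sum, ite_and]

theorem columnBlock_mem_centralizer {S : Set (Matrix ι ι R)}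
    {T : Matrix ι ι R →ₗ[R] Matrix ι ι R} (hT : ∀ A ∈ S, ∀ X, T (A * X) = A * T X) (j k : ι) :
    columnBlock T j k ∈ S.centralizer := by
  intro A hA
  ext r s
  have hentry := congrFun (congrFun (hT A hA (single s k 1)) r) j
  rw [linearMap_apply_eq_sum_smul T (A * _)] at hentry
  simpa [columnBlock, mul_apply, sum_apply, single_apply, mul_comm, ite_and] using hentry.symm

theorem linearMap_map_mul_left_of_mem_centralizer_centralizer {S : Set (Matrix ι ι R)}
    {T : Matrix ι ι R →ₗ[R] Matrix ι ι R} (hT : ∀ A ∈ S, ∀ X, T (A * X) = A * T X)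
    {B : Matrix ι ι R} (hB : B ∈ S.centralizer.centralizer) (X : Matrix ι ι R) :
    T (B * X) = B * T X := by
  simp only [linearMap_apply_eq_sum_columnBlock T, Finset.mul_sum, ← Matrix.mul_assoc,
    hB _ (columnBlock_mem_centralizer hT _ _)]

end Matrix

open scoped ComplexOrder Matrix in
theorem StarSubalgebra.exists_retraction_map_mul_left {𝕜 ι : Type*} [RCLike 𝕜] [Fintype ι]
    [DecidableEq ι] (M : StarSubalgebra 𝕜 (Matrix ι ι 𝕜)) :
    ∃ P : Matrix ι ι 𝕜 →ₗ[𝕜] Matrix ι ι 𝕜,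
      (∀ X, P X ∈ M) ∧ (∀ X ∈ M, P X = X) ∧ ∀ A ∈ M, ∀ X, P (A * X) = A * P X := by
  let _ : NormedAddCommGroup (Matrix ι ι 𝕜) := Matrix.toMatrixNormedAddCommGroup 1 .one
  let _ : InnerProductSpace 𝕜 (Matrix ι ι 𝕜) :=
    Matrix.toMatrixInnerProductSpace 1 Matrix.PosDef.one.posSemidef
  have inner_eq (X Y : Matrix ι ι 𝕜) : inner 𝕜 X Y = (Y * 1 * Xᴴ).trace := rfl
  let K := Subalgebra.toSubmodule M.toSubalgebra
  refine ⟨K.starProjection, K.starProjection_apply_mem,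
    fun X hX => K.starProjection_eq_self_iff.2 hX, fun A hA X => ?_⟩
  refine K.starProjection_apply_comm_of_invariant (T := LinearMap.mulLeft 𝕜 A)
    (S := LinearMap.mulLeft 𝕜 Aᴴ) (fun X Y => ?_) (fun X hX => M.mul_mem hA hX)
    (fun X hX => M.mul_mem (star_mem (s := M) hA) hX) X
  simp only [LinearMap.mulLeft_apply, inner_eq, Matrix.mul_one, Matrix.conjTranspose_mul]
  rw [← Matrix.mul_assoc, Matrix.trace_mul_cycle]

/-- Bicommutant theorem: for a von Neumann algebra (unital *-subalgebra) `M` of the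
operators on a finite-dimensional complex Hilbert space, `M'' = M`. -/
theorem bicommutant_eq (n : ℕ)
    (M : StarSubalgebra ℂ (Matrix (Fin n) (Fin n) ℂ)) :
    {B : Matrix (Fin n) (Fin n) ℂ |
        ∀ C ∈ {C : Matrix (Fin n) (Fin n) ℂ | ∀ A ∈ M, A * C = C * A}, C * B = B * C}
      = (M : Set (Matrix (Fin n) (Fin n) ℂ)) := by
  change Set.centralizer (Set.centralizer (M : Set (Matrix (Fin n) (Fin n) ℂ))) = M
  refine subset_antisymm (fun B hB => ?_) Set.subset_centralizer_centralizer
  obtain ⟨P, hPM, hPfix, hPmul⟩ := M.exists_retraction_map_mul_left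
  have hBP : P (B * 1) = B * P 1 :=
    Matrix.linearMap_map_mul_left_of_mem_centralizer_centralizer hPmul hB 1
  rw [mul_one, hPfix 1 (one_mem M), mul_one] at hBP
  exact hBP ▸ hPM B
end

section
/- If M' is an algebra on PH such that P(L(H_A) ⊗ I_{Ā})P commutes elementwise with M', then M' is private for the complementary channel Ē^C of the erasure channel Ē of H_A with respect to P; explicitly, P(Ē^C)†(L(H_C))P = P(L(H_A) ⊗ I_{Ā})P ⊆ (M')' inside L(PH). -/
open Matrix Kronecker

/-!
Each product `Ē_kᴴ Ē_l` equals `a⁻¹ • (|k₂⟩⟨k₁|l₁⟩⟨l₂| ⊗ I)`, so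
`(Ē^C)†(σ) = (a⁻¹ • Tr₁ σ) ⊗ I`, where `Tr₁` traces out the first factor of `H_A ⊗ H_A`.
Since `Tr₁ (I ⊗ X) = a • X`, the image of `(Ē^C)†` is exactly `L(H_A) ⊗ I`, and the commutation
with `M'` is then the hypothesis.
-/

namespace Matrix

variable {ι m n p R : Type*}

def partialTraceFst [Fintype m] [AddCommMonoid R] (σ : Matrix (m × n) (m × n) R) :
    Matrix n n R :=
  of fun i j => ∑ r, σ (r, i) (r, j)

theorem sum_kronecker [Semiring R] (s : Finset ι) (A : ι → Matrix m n R) (B : Matrix p p R) :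
    (∑ i ∈ s, A i) ⊗ₖ B = ∑ i ∈ s, A i ⊗ₖ B :=
  map_sum ((kroneckerBilinear (R := ℕ) (α := R)).flip B) A s

theorem partialTraceFst_one_kronecker [Fintype m] [DecidableEq m] [Semiring R]
    (X : Matrix n n R) : partialTraceFst ((1 : Matrix m m R) ⊗ₖ X) = Fintype.card m • X := by
  ext i j
  simp [partialTraceFst]

theorem sum_smul_single_mul_single_eq_partialTraceFst [Fintype m] [DecidableEq m]
    [Fintype n] [DecidableEq n] [Semiring R] (σ : Matrix (m × n) (m × n) R) :
    ∑ k, ∑ l, σ k l • (single k.2 k.1 (1 : R) * single l.1 l.2 (1 : R)) = partialTraceFst σ := by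
  ext i j
  simp [partialTraceFst, sum_apply, Fintype.sum_prod_type, mul_apply, single_apply, ite_and]

theorem conjTranspose_smul_single_kronecker_one_mul [Fintype m] [DecidableEq m] [Fintype n]
    [DecidableEq n] [CommSemiring R] [StarRing R] (c : R) (i j k l : m) :
    (c • (single i j (1 : R) ⊗ₖ (1 : Matrix n n R)))ᴴ * (c • (single k l 1 ⊗ₖ 1)) =
      (star c * c) • ((single j i 1 * single k l 1) ⊗ₖ 1) := by
  rw [conjTranspose_smul, conjTranspose_kronecker, conjTranspose_single, conjTranspose_one,
    star_one, smul_mul_smul_comm, ← mul_kronecker_mul, mul_one]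

theorem sum_smul_kraus_mul_eq_partialTraceFst_kronecker [Fintype m] [DecidableEq m]
    [Fintype n] [DecidableEq n] [CommSemiring R] [StarRing R] (c : R)
    (σ : Matrix (m × m) (m × m) R) :
    ∑ k, ∑ l, σ k l • ((c • (single k.1 k.2 (1 : R) ⊗ₖ (1 : Matrix n n R)))ᴴ *
      (c • (single l.1 l.2 1 ⊗ₖ 1))) = ((star c * c) • partialTraceFst σ) ⊗ₖ 1 := by
  simp_rw [conjTranspose_smul_single_kronecker_one_mul, ← smul_kronecker, ← sum_kronecker,
    ← sum_smul_single_mul_single_eq_partialTraceFst, Finset.smul_sum, smul_comm (star c * c)]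

end Matrix

theorem private_for_complementary_general (a b : ℕ) (ha : 0 < a)
    (P : Matrix (Fin a × Fin b) (Fin a × Fin b) ℂ)
    (S : Set (Matrix (Fin a × Fin b) (Fin a × Fin b) ℂ))
    (hcomm : ∀ Y ∈ S, ∀ X : Matrix (Fin a) (Fin a) ℂ,
      (P * (X ⊗ₖ (1 : Matrix (Fin b) (Fin b) ℂ)) * P) * Y =
        Y * (P * (X ⊗ₖ (1 : Matrix (Fin b) (Fin b) ℂ)) * P)) :
    let Kb : Fin a × Fin a → Matrix (Fin a × Fin b) (Fin a × Fin b) ℂ :=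
      fun k => (((Real.sqrt a : ℝ) : ℂ))⁻¹ •
        (Matrix.single k.1 k.2 (1 : ℂ) ⊗ₖ (1 : Matrix (Fin b) (Fin b) ℂ))
    -- dual of the complementary channel: (Ē^C)†(σ) = Σ_{k,l} σ k l • Ē_k† Ē_l
    let dualC : Matrix (Fin a × Fin a) (Fin a × Fin a) ℂ →
        Matrix (Fin a × Fin b) (Fin a × Fin b) ℂ :=
      fun σ => ∑ k : Fin a × Fin a, ∑ l : Fin a × Fin a, σ k l • ((Kb k)ᴴ * Kb l)
    ({m | ∃ σ, m = P * dualC σ * P}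
        = {m | ∃ X : Matrix (Fin a) (Fin a) ℂ,
            m = P * (X ⊗ₖ (1 : Matrix (Fin b) (Fin b) ℂ)) * P}) ∧
    (∀ m ∈ {m | ∃ σ, m = P * dualC σ * P}, ∀ Y ∈ S, m * Y = Y * m) := by
  intro Kb dualC
  have hnorm : star ((Real.sqrt a : ℂ))⁻¹ * ((Real.sqrt a : ℂ))⁻¹ = (a : ℂ)⁻¹ := by
    rw [star_inv₀, Complex.star_def, Complex.conj_ofReal, ← mul_inv, ← Complex.ofReal_mul,
      Real.mul_self_sqrt a.cast_nonneg, Complex.ofReal_natCast]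
  have hdual : ∀ σ, dualC σ = ((a : ℂ)⁻¹ • partialTraceFst σ) ⊗ₖ 1 := fun σ => by
    rw [← hnorm]
    exact sum_smul_kraus_mul_eq_partialTraceFst_kronecker _ σ
  refine ⟨Set.ext fun m => ⟨?_, ?_⟩, ?_⟩
  · rintro ⟨σ, rfl⟩
    exact ⟨_, by rw [hdual]⟩
  · rintro ⟨X, rfl⟩
    refine ⟨1 ⊗ₖ X, ?_⟩
    rw [hdual, partialTraceFst_one_kronecker, Fintype.card_fin, ← Nat.cast_smul_eq_nsmul ℂ,
      smul_smul, inv_mul_cancel₀ (by exact_mod_cast ha.ne'), one_smul]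
  · rintro m ⟨σ, rfl⟩ Y hY
    rw [hdual]
    exact hcomm Y hY _

/-- If `P(L(H_A) ⊗ I)P` commutes elementwise with an algebra `S = M'` on `PH`, then
`S` is private for the complementary channel of the erasure channel `Ē` of `H_A`:
explicitly, `P(Ē^C)†(L(H_C))P = P(L(H_A) ⊗ I)P ⊆ (M')'` inside `L(PH)`. -/
theorem private_for_complementary (a b : ℕ) (ha : 0 < a) (hb : 0 < b)
    (P : Matrix (Fin a × Fin b) (Fin a × Fin b) ℂ)
    (hP1 : P.IsHermitian) (hP2 : P * P = P)
    (S : Set (Matrix (Fin a × Fin b) (Fin a × Fin b) ℂ))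
    (hS : ∀ Y ∈ S, Y = P * Y * P)
    (hcomm : ∀ Y ∈ S, ∀ X : Matrix (Fin a) (Fin a) ℂ,
      (P * (X ⊗ₖ (1 : Matrix (Fin b) (Fin b) ℂ)) * P) * Y =
        Y * (P * (X ⊗ₖ (1 : Matrix (Fin b) (Fin b) ℂ)) * P)) :
    let Kb : Fin a × Fin a → Matrix (Fin a × Fin b) (Fin a × Fin b) ℂ :=
      fun k => (((Real.sqrt a : ℝ) : ℂ))⁻¹ •
        (Matrix.single k.1 k.2 (1 : ℂ) ⊗ₖ (1 : Matrix (Fin b) (Fin b) ℂ))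
    -- dual of the complementary channel: (Ē^C)†(σ) = Σ_{k,l} σ k l • Ē_k† Ē_l
    let dualC : Matrix (Fin a × Fin a) (Fin a × Fin a) ℂ →
        Matrix (Fin a × Fin b) (Fin a × Fin b) ℂ :=
      fun σ => ∑ k : Fin a × Fin a, ∑ l : Fin a × Fin a, σ k l • ((Kb k)ᴴ * Kb l)
    ({m | ∃ σ, m = P * dualC σ * P}
        = {m | ∃ X : Matrix (Fin a) (Fin a) ℂ,
            m = P * (X ⊗ₖ (1 : Matrix (Fin b) (Fin b) ℂ)) * P}) ∧
    (∀ m ∈ {m | ∃ σ, m = P * dualC σ * P}, ∀ Y ∈ S, m * Y = Y * m) :=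
  private_for_complementary_general a b ha P S hcomm
end

section
/- For V = (1/√2)(|0000⟩⟨0| + |0100⟩⟨0| + |1010⟩⟨1| + |1111⟩⟨1|), the operator O = I₁ ⊗ (I − Z)₂ ⊗ I₃ ⊗ Z₄, which acts as identity on qubits 1 and 3, satisfies V†OV = Z, which does not commute with X. Hence the algebra V†(L(H_{A_{1,3}}) ⊗ I)V = L(C²) is not private from the subregion {2,4} in the sense of Definition 4.1 of Pollack–Rall–Rocchetto, refuting the claim that correctable from A implies private from Ā under that definition. -/
open Matrix Kronecker

/-- The encoding map `V = (1/√2)(|0000⟩⟨0| + |0100⟩⟨0| + |1010⟩⟨1| + |1111⟩⟨1|)`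
from one logical qubit to four physical qubits. -/
noncomputable def Venc : Matrix ((Fin 2 × Fin 2) × Fin 2 × Fin 2) (Fin 2) ℂ :=
  Matrix.of fun p e =>
    (((Real.sqrt 2 : ℝ) : ℂ))⁻¹ *
      (if (p = ((0, 0), (0, 0)) ∧ e = 0) ∨ (p = ((0, 1), (0, 0)) ∧ e = 0) ∨
          (p = ((1, 0), (1, 0)) ∧ e = 1) ∨ (p = ((1, 1), (1, 1)) ∧ e = 1)
        then 1 else 0)


/-- Reordering of the four physical qubits `((q1,q2),(q3,q4)) ↦ ((q1,q3),(q2,q4))`. -/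
def qswap : ((Fin 2 × Fin 2) × Fin 2 × Fin 2) ≃ ((Fin 2 × Fin 2) × Fin 2 × Fin 2) :=
  ⟨fun p => ((p.1.1, p.2.1), (p.1.2, p.2.2)), fun p => ((p.1.1, p.2.1), (p.1.2, p.2.2)),
    fun _ => rfl, fun _ => rfl⟩

/-- The diagonal of the operator `O = I₁ ⊗ (I−Z)₂ ⊗ I₃ ⊗ Z₄`. -/
noncomputable def dvec : ((Fin 2 × Fin 2) × Fin 2 × Fin 2) → ℂ := fun p =>
  (if p.1.2 = 1 then 2 else 0) * (if p.2.2 = 1 then -1 else 1)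

set_option maxHeartbeats 1000000 in
lemma hOdiag :
    (((1 : Matrix (Fin 2) (Fin 2) ℂ) ⊗ₖ
          ((1 : Matrix (Fin 2) (Fin 2) ℂ) - !![1, 0; 0, -1])) ⊗ₖ
        ((1 : Matrix (Fin 2) (Fin 2) ℂ) ⊗ₖ (!![1, 0; 0, -1] : Matrix (Fin 2) (Fin 2) ℂ)))
      = Matrix.diagonal dvec := by
  ext ⟨⟨a,b⟩,c,e⟩ ⟨⟨a',b'⟩,c',e'⟩
  fin_cases a <;> fin_cases b <;> fin_cases c <;> fin_cases e <;>
    fin_cases a' <;> fin_cases b' <;> fin_cases c' <;> fin_cases e' <;>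
    simp [dvec, Matrix.one_apply, Matrix.diagonal, Prod.ext_iff] <;> norm_num

lemma hc2 : (((Real.sqrt 2 : ℝ) : ℂ))⁻¹ * (((Real.sqrt 2 : ℝ) : ℂ))⁻¹ = 2⁻¹ := by
  rw [← mul_inv, ← Complex.ofReal_mul, Real.mul_self_sqrt (by norm_num)]
  norm_num

set_option maxHeartbeats 1000000 in
lemma key : Vencᴴ * (Matrix.diagonal dvec) * Venc = (!![1,0;0,-1] : Matrix (Fin 2) (Fin 2) ℂ) := by
  ext i j
  rw [Matrix.mul_assoc]
  fin_cases i <;> fin_cases j <;>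
    simp [Matrix.mul_apply, Venc, dvec, Fintype.sum_prod_type, Fin.sum_univ_two,
      Matrix.conjTranspose_apply, Prod.ext_iff, mul_comm, mul_assoc, mul_left_comm] <;>
    norm_num [hc2]

lemma notcomm : ¬ Commute (!![1, 0; 0, -1] : Matrix (Fin 2) (Fin 2) ℂ) (!![0, 1; 1, 0] : Matrix (Fin 2) (Fin 2) ℂ) := by
  intro h
  have := Matrix.ext_iff.2 h 0 1
  norm_num [Matrix.mul_apply, Fin.sum_univ_two] at this

set_option maxHeartbeats 1000000 in
lemma hswap :
    (((1 : Matrix (Fin 2 × Fin 2) (Fin 2 × Fin 2) ℂ) ⊗ₖ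
        (((1 : Matrix (Fin 2) (Fin 2) ℂ) - !![1, 0; 0, -1]) ⊗ₖ
          (!![1, 0; 0, -1] : Matrix (Fin 2) (Fin 2) ℂ))).submatrix qswap qswap)
      = Matrix.diagonal dvec := by
  ext ⟨⟨a,b⟩,c,e⟩ ⟨⟨a',b'⟩,c',e'⟩
  fin_cases a <;> fin_cases b <;> fin_cases c <;> fin_cases e <;>
    fin_cases a' <;> fin_cases b' <;> fin_cases c' <;> fin_cases e' <;>
    simp [qswap, dvec, Matrix.one_apply, Matrix.diagonal, Prod.ext_iff] <;> norm_num

/-- The operator `O = I₁ ⊗ (I−Z)₂ ⊗ I₃ ⊗ Z₄` (identity on qubits 1 and 3) satisfies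
`V†OV = Z`, which does not commute with `X`; hence the logical algebra for the
bipartition `A = {1,3}` is not private from `{2,4}` in the (incorrect) sense of
Pollack–Rall–Rocchetto Definition 4.1. -/
theorem not_private_from_24 :
    Vencᴴ * (((1 : Matrix (Fin 2) (Fin 2) ℂ) ⊗ₖ
          ((1 : Matrix (Fin 2) (Fin 2) ℂ) - !![1, 0; 0, -1])) ⊗ₖ
        ((1 : Matrix (Fin 2) (Fin 2) ℂ) ⊗ₖ (!![1, 0; 0, -1] : Matrix (Fin 2) (Fin 2) ℂ))) * Venc
      = (!![1, 0; 0, -1] : Matrix (Fin 2) (Fin 2) ℂ) ∧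
    ¬ Commute (!![1, 0; 0, -1] : Matrix (Fin 2) (Fin 2) ℂ) (!![0, 1; 1, 0] : Matrix (Fin 2) (Fin 2) ℂ) ∧
    ¬ (∀ Y : Matrix (Fin 2 × Fin 2) (Fin 2 × Fin 2) ℂ,
        ∀ W : Matrix (Fin 2) (Fin 2) ℂ,
          Commute
            (Vencᴴ *
              ((((1 : Matrix (Fin 2 × Fin 2) (Fin 2 × Fin 2) ℂ) ⊗ₖ Y).submatrix qswap qswap)) *
              Venc)
            W) := by
  refine ⟨?_, notcomm, ?_⟩
  · rw [hOdiag]; exact key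
  · intro h
    have := h (((1 : Matrix (Fin 2) (Fin 2) ℂ) - !![1, 0; 0, -1]) ⊗ₖ
        (!![1, 0; 0, -1] : Matrix (Fin 2) (Fin 2) ℂ)) !![0, 1; 1, 0]
    rw [hswap, key] at this
    exact notcomm this
end
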